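/- arXiv:1704.01685 — 2 statements merged into one kernel-verified Lean document; each statement's English description precedes it below -/
import Mathlib

section
/- Let p = df+1, q = df'+1 be distinct odd primes with d = gcd(p-1,q-1), and let Ω_0, Ω_1 be the Gauss periods over D_0* and D_1*. If ff' is even and d ≡ 2 (mod 4), then Ω_0·Ω_1 = (1 + pq)/4, so {Ω_0, Ω_1} = {(1+√(-pq))/2, (1-√(-pq))/2}. -/
/-!
Every unit of `ℤ/pq` is `g^t x^i` with `t < L`, `i < d`, and its Jacobi symbol `(a/pq)` is
`(-1)^i`; hence `D_j*` is exactly the set where the Jacobi symbol equals `(-1)^j`. Writing the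
indicator of that set as `((a/pq)² + (-1)^j (a/pq)) / 2` and splitting both sums along
`ℤ/pq ≅ ℤ/p × ℤ/q` gives `Ω_j = (1 + (-1)^j G_p G_q) / 2`, where `G_p`, `G_q` are the quadratic
Gauss sums (the sum of `ω^a` over the units is `(-1)(-1) = 1`). Finally
`(G_p G_q)² = χ₄(p) χ₄(q) pq = -pq`, since the hypotheses on `d` and `f f'` force `pq ≡ 3 (mod 4)`.
-/

open Finset

theorem Finset.sum_filter_eq_neg_one_pow {ι K : Type*} [Field K] [DecidableEq K] [NeZero (2 : K)]
    (s : Finset ι) (σ h : ι → K) (hσ : ∀ a ∈ s, σ a = 0 ∨ σ a = 1 ∨ σ a = -1) (j : ℕ) :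
    ∑ a ∈ s with σ a = (-1) ^ j, h a =
      (∑ a ∈ s, σ a ^ 2 * h a + (-1) ^ j * ∑ a ∈ s, σ a * h a) / 2 := by
  rw [eq_div_iff two_ne_zero, mul_sum, ← sum_add_distrib, sum_filter, sum_mul]
  have hne : (-1 : K) ≠ 1 := fun h => (two_ne_zero : (2 : K) ≠ 0) (by linear_combination -h)
  refine sum_congr rfl fun a ha => ?_
  rcases neg_one_pow_eq_or K j with hj | hj <;> rcases hσ a ha with h0 | h0 | h0 <;>
    simp [hj, h0, hne, hne.symm] <;> ring

theorem exists_pow_eq_pow_add_and_pow_eq_pow {M N : Type*} [Monoid M] [Monoid N] (a : M) (b : N)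
    {L : ℕ} (hL : 0 < L) (haL : orderOf a ∣ L) (hbL : orderOf b ∣ L) (k l : ℕ) :
    ∃ t < L, ∃ i < (orderOf a).gcd (orderOf b), a ^ k = a ^ (t + i) ∧ b ^ l = b ^ t := by
  set m := orderOf a
  set d := m.gcd (orderOf b)
  have hm : 0 < m := Nat.pos_of_dvd_of_pos haL hL
  have hd : 0 < d := Nat.gcd_pos_of_pos_left _ hm
  -- `s ≡ k - l (mod m)`, written without truncated subtraction
  set s := k + (m - 1) * l
  obtain ⟨c, hcm, hcn⟩ := Nat.chineseRemainder' (Nat.add_mul_mod_self_left l d (s / d))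
  refine ⟨c % L, Nat.mod_lt _ hL, s % d, Nat.mod_lt _ hd, ?_, ?_⟩
  · rw [← pow_mod_orderOf a k, ← pow_mod_orderOf a (c % L + s % d)]
    congr 1
    calc k ≡ k + m * l [MOD m] := (Nat.add_mul_mod_self_left k m l).symm
      _ = l + d * (s / d) + s % d := by
          have : (m - 1) * l + l = m * l := by
            rw [← Nat.succ_mul, Nat.succ_eq_add_one, Nat.sub_add_cancel hm]
          rw [add_assoc, Nat.div_add_mod]
          omega
      _ ≡ c + s % d [MOD m] := hcm.symm.add_right _
      _ ≡ c % L + s % d [MOD m] := ((Nat.mod_modEq c L).of_dvd haL).symm.add_right _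
  · rw [← pow_mod_orderOf b l, ← pow_mod_orderOf b (c % L)]
    exact congrArg _ (hcn.symm.trans ((Nat.mod_modEq c L).of_dvd hbL).symm)

section ChineseRemainder

variable {p q : ℕ} (hpq : p.Coprime q) {R : Type*} [CommRing R]

def AddChar.crtFst (ψ : AddChar (ZMod (p * q)) R) : AddChar (ZMod p) R :=
  ψ.compAddMonoidHom
    ((ZMod.chineseRemainder hpq).symm.toAddMonoidHom.comp (AddMonoidHom.inl _ _))

def AddChar.crtSnd (ψ : AddChar (ZMod (p * q)) R) : AddChar (ZMod q) R :=
  ψ.compAddMonoidHom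
    ((ZMod.chineseRemainder hpq).symm.toAddMonoidHom.comp (AddMonoidHom.inr _ _))

theorem AddChar.crtFst_mul_crtSnd (ψ : AddChar (ZMod (p * q)) R) (a : ZMod (p * q)) :
    ψ.crtFst hpq (ZMod.chineseRemainder hpq a).1 * ψ.crtSnd hpq (ZMod.chineseRemainder hpq a).2 =
      ψ a := by
  rw [crtFst, crtSnd, compAddMonoidHom_apply, compAddMonoidHom_apply, ← map_add_eq_mul]
  simp [← map_add]

theorem AddChar.crtFst_ne_one [NeZero q] [Fact (1 < p)] {ψ : AddChar (ZMod (p * q)) R}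
    (hψ : ψ.IsPrimitive) : ψ.crtFst hpq ≠ 1 := by
  intro h
  have h1 := DFunLike.congr_fun h 1
  rw [crtFst, compAddMonoidHom_apply, one_apply, hψ.zmod_char_eq_one_iff] at h1
  simp at h1

theorem AddChar.crtSnd_ne_one [NeZero p] [Fact (1 < q)] {ψ : AddChar (ZMod (p * q)) R}
    (hψ : ψ.IsPrimitive) : ψ.crtSnd hpq ≠ 1 := by
  intro h
  have h1 := DFunLike.congr_fun h 1
  rw [crtSnd, compAddMonoidHom_apply, one_apply, hψ.zmod_char_eq_one_iff] at h1
  simp at h1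

theorem sum_mulChar_mul_mulChar_mul_addChar [NeZero p] [NeZero q] (χ₁ : MulChar (ZMod p) R)
    (χ₂ : MulChar (ZMod q) R) (ψ : AddChar (ZMod (p * q)) R) :
    ∑ a, χ₁ (ZMod.chineseRemainder hpq a).1 * χ₂ (ZMod.chineseRemainder hpq a).2 * ψ a =
      gaussSum χ₁ (ψ.crtFst hpq) * gaussSum χ₂ (ψ.crtSnd hpq) := by
  rw [gaussSum, gaussSum, sum_mul_sum, ← Fintype.sum_prod_type',
    ← (ZMod.chineseRemainder hpq).toEquiv.sum_comp]
  refine sum_congr rfl fun a _ => ?_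
  rw [← ψ.crtFst_mul_crtSnd hpq a]
  simp only [RingEquiv.toEquiv_eq_coe, EquivLike.coe_coe]
  ring

theorem chineseRemainder_pow_mul_pow {g x : ℕ} (hxp : (x : ZMod p) = g) (hxq : (x : ZMod q) = 1)
    (t i : ℕ) :
    ZMod.chineseRemainder hpq ((g : ZMod (p * q)) ^ t * (x : ZMod (p * q)) ^ i) =
      ((g : ZMod p) ^ (t + i), (g : ZMod q) ^ t) := by
  rw [map_mul, map_pow, map_pow, map_natCast, map_natCast]
  ext <;> simp [hxp, hxq, pow_add]

end ChineseRemainder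

theorem MulChar.IsQuadratic.sq_apply {M R : Type*} [CommMonoid M] [CommRing R]
    {χ : MulChar M R} (hχ : χ.IsQuadratic) (a : M) : χ a ^ 2 = (1 : MulChar M R) a := by
  rw [← χ.pow_apply' two_ne_zero, hχ.sq_eq_one]

section QuadraticChar

variable (p : ℕ) [Fact p.Prime]

def complexQuadraticChar : MulChar (ZMod p) ℂ :=
  (quadraticChar (ZMod p)).ringHomComp (Int.castRingHom ℂ)

variable {p}

theorem complexQuadraticChar_isQuadratic : (complexQuadraticChar p).IsQuadratic :=
  (quadraticChar_isQuadratic _).comp _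

theorem complexQuadraticChar_ne_one (hp : p ≠ 2) : complexQuadraticChar p ≠ 1 :=
  (MulChar.ringHomComp_ne_one_iff Int.cast_injective).mpr
    (quadraticChar_ne_one (by rwa [ZMod.ringChar_zmod_n]))

theorem gaussSum_complexQuadraticChar_sq (hp : p ≠ 2) {ψ : AddChar (ZMod p) ℂ} (hψ : ψ ≠ 1) :
    gaussSum (complexQuadraticChar p) ψ ^ 2 = ZMod.χ₄ p * p := by
  rw [gaussSum_sq (χ := complexQuadraticChar p) (complexQuadraticChar_ne_one hp)
    complexQuadraticChar_isQuadratic (AddChar.IsPrimitive.of_ne_one hψ), complexQuadraticChar,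
    MulChar.ringHomComp_apply, quadraticChar_neg_one (by rwa [ZMod.ringChar_zmod_n]), ZMod.card]
  simp

theorem complexQuadraticChar_eq_neg_one_of_orderOf (hp : p ≠ 2) {g : ZMod p}
    (hg : orderOf g = p - 1) : complexQuadraticChar p g = -1 := by
  have hp3 : 3 ≤ p := (Fact.out : p.Prime).two_le.lt_of_ne' hp
  have hg0 : g ≠ 0 := by
    rintro rfl
    rw [orderOf_zero] at hg
    omega
  have hsq : ¬ IsSquare g := by
    rw [ZMod.euler_criterion p hg0, ← orderOf_dvd_iff_pow_eq_one, hg]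
    intro h
    have := Nat.le_of_dvd (Nat.div_pos (by omega) two_pos) h
    omega
  rw [complexQuadraticChar, MulChar.ringHomComp_apply,
    quadraticChar_neg_one_iff_not_isSquare.mpr hsq]
  simp

end QuadraticChar

theorem add_one_mul_add_one_mod_four {a b d f f' : ℕ} (hd : d = a.gcd b) (hf : a = d * f)
    (hf' : b = d * f') (hd4 : d % 4 = 2) (hff' : Even (f * f')) :
    (a + 1) * (b + 1) % 4 = 3 := by
  have hcop : f.gcd f' = 1 := by
    have h := hd
    rw [hf, hf', Nat.gcd_mul_left] at h
    exact (Nat.mul_eq_left (by omega)).mp h.symm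
  have hodd : ∀ {u v : ℕ}, u.gcd v = 1 → u % 2 = 0 → (d * u) % 4 = 0 ∧ (d * v) % 4 = 2 := by
    intro u v huv hu
    have hv : v % 2 = 1 := by
      by_contra hv
      have h2 := Nat.dvd_gcd (Nat.dvd_of_mod_eq_zero hu)
        (Nat.dvd_of_mod_eq_zero (show v % 2 = 0 by omega))
      rw [huv] at h2
      omega
    constructor <;> rw [Nat.mul_mod, hd4] <;> omega
  rcases Nat.even_mul.mp hff' with h | h
  · obtain ⟨ha, hb⟩ := hodd hcop (Nat.even_iff.mp h)
    rw [Nat.mul_mod, show (a + 1) % 4 = 1 by omega, show (b + 1) % 4 = 3 by omega]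
  · obtain ⟨hb, ha⟩ := hodd (Nat.gcd_comm f f' ▸ hcop) (Nat.even_iff.mp h)
    rw [Nat.mul_mod, show (a + 1) % 4 = 3 by omega, show (b + 1) % 4 = 1 by omega]

theorem dvd_mul_div_and_dvd_mul_div_and_pos {a b d : ℕ} (hda : d ∣ a) (hdb : d ∣ b) (ha : 0 < a)
    (hb : 0 < b) : a ∣ a * b / d ∧ b ∣ a * b / d ∧ 0 < a * b / d := by
  obtain ⟨f, rfl⟩ := hda
  obtain ⟨f', rfl⟩ := hdb
  have h : d * f * (d * f') / d = d * f * f' := by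
    rw [mul_left_comm, Nat.mul_div_cancel_left _ (Nat.pos_of_mul_pos_right ha)]
  rw [h]
  exact ⟨⟨f', rfl⟩, ⟨f, by ring⟩, Nat.mul_pos ha (Nat.pos_of_mul_pos_left hb)⟩

section JacobiChar

variable {p q : ℕ} [Fact p.Prime] [Fact q.Prime] (hpq : p.Coprime q)

noncomputable def jacobiChar (a : ZMod (p * q)) : ℂ :=
  complexQuadraticChar p (ZMod.chineseRemainder hpq a).1 *
    complexQuadraticChar q (ZMod.chineseRemainder hpq a).2

theorem jacobiChar_eq_zero_or_one_or_neg_one (a : ZMod (p * q)) :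
    jacobiChar hpq a = 0 ∨ jacobiChar hpq a = 1 ∨ jacobiChar hpq a = -1 := by
  rcases complexQuadraticChar_isQuadratic (ZMod.chineseRemainder hpq a).1 with h | h | h <;>
  rcases complexQuadraticChar_isQuadratic (ZMod.chineseRemainder hpq a).2 with h' | h' | h' <;>
  simp [jacobiChar, h, h']

theorem sum_filter_jacobiChar_eq_neg_one_pow {ψ : AddChar (ZMod (p * q)) ℂ} (hψ : ψ.IsPrimitive)
    (j : ℕ) :
    ∑ a with jacobiChar hpq a = (-1) ^ j, ψ a =
      (1 + (-1) ^ j * (gaussSum (complexQuadraticChar p) (ψ.crtFst hpq) *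
        gaussSum (complexQuadraticChar q) (ψ.crtSnd hpq))) / 2 := by
  have hsq (a : ZMod (p * q)) : jacobiChar hpq a ^ 2 =
      (1 : MulChar (ZMod p) ℂ) (ZMod.chineseRemainder hpq a).1 *
        (1 : MulChar (ZMod q) ℂ) (ZMod.chineseRemainder hpq a).2 := by
    rw [jacobiChar, mul_pow, complexQuadraticChar_isQuadratic.sq_apply,
      complexQuadraticChar_isQuadratic.sq_apply]
  rw [sum_filter_eq_neg_one_pow _ _ _ (fun a _ => jacobiChar_eq_zero_or_one_or_neg_one hpq a)]
  simp only [hsq]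
  simp only [jacobiChar]
  rw [sum_mulChar_mul_mulChar_mul_addChar, sum_mulChar_mul_mulChar_mul_addChar,
    gaussSum_one_left (ψ.crtFst_ne_one hpq hψ), gaussSum_one_left (ψ.crtSnd_ne_one hpq hψ)]
  norm_num

theorem gaussSum_mul_gaussSum_sq (hp : p ≠ 2) (hq : q ≠ 2) {ψ₁ : AddChar (ZMod p) ℂ}
    {ψ₂ : AddChar (ZMod q) ℂ} (hψ₁ : ψ₁ ≠ 1) (hψ₂ : ψ₂ ≠ 1) (h4 : p * q % 4 = 3) :
    (gaussSum (complexQuadraticChar p) ψ₁ * gaussSum (complexQuadraticChar q) ψ₂) ^ 2 =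
      -(p * q : ℂ) := by
  have hχ₄ : (ZMod.χ₄ p : ℂ) * ZMod.χ₄ q = -1 := by
    rw [← Int.cast_mul, ← map_mul, ← Nat.cast_mul, ZMod.χ₄_nat_three_mod_four h4]
    simp
  rw [mul_pow, gaussSum_complexQuadraticChar_sq hp hψ₁, gaussSum_complexQuadraticChar_sq hq hψ₂]
  linear_combination (p * q : ℂ) * hχ₄

end JacobiChar

section Whiteman

variable {p q : ℕ} [Fact p.Prime] [Fact q.Prime] (hpq : p.Coprime q) {g x : ℕ}

theorem jacobiChar_pow_mul_pow (hp : p ≠ 2) (hq : q ≠ 2) (hgp : orderOf (g : ZMod p) = p - 1)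
    (hgq : orderOf (g : ZMod q) = q - 1) (hxp : (x : ZMod p) = g) (hxq : (x : ZMod q) = 1)
    (t i : ℕ) :
    jacobiChar hpq ((g : ZMod (p * q)) ^ t * (x : ZMod (p * q)) ^ i) = (-1) ^ i := by
  rw [jacobiChar, chineseRemainder_pow_mul_pow hpq hxp hxq, map_pow, map_pow,
    complexQuadraticChar_eq_neg_one_of_orderOf hp hgp,
    complexQuadraticChar_eq_neg_one_of_orderOf hq hgq, pow_add, mul_right_comm, ← mul_pow]
  norm_num

theorem mem_biUnion_image_iff_jacobiChar (hp : p ≠ 2) (hq : q ≠ 2)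
    (hgp : orderOf (g : ZMod p) = p - 1) (hgq : orderOf (g : ZMod q) = q - 1)
    (hxp : (x : ZMod p) = g) (hxq : (x : ZMod q) = 1) {d L : ℕ} (hd : d = (p - 1).gcd (q - 1))
    (hd2 : Even d) (hL : 0 < L) (hpL : p - 1 ∣ L) (hqL : q - 1 ∣ L) {j : ℕ} (hj : j < 2)
    (a : ZMod (p * q)) :
    a ∈ (range (d / 2)).biUnion (fun k => (range L).image
      fun t => (g : ZMod (p * q)) ^ t * (x : ZMod (p * q)) ^ (2 * k + j)) ↔
      jacobiChar hpq a = (-1) ^ j := by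
  simp only [mem_biUnion, mem_range, mem_image]
  constructor
  · rintro ⟨k, -, t, -, rfl⟩
    rw [jacobiChar_pow_mul_pow hpq hp hq hgp hgq hxp hxq, pow_add, pow_mul]
    norm_num
  · intro ha
    have ha0 : jacobiChar hpq a ≠ 0 := ha ▸ pow_ne_zero j (neg_ne_zero.mpr one_ne_zero)
    have hu : (ZMod.chineseRemainder hpq a).1 ≠ 0 := fun h =>
      ha0 (by simp [jacobiChar, h, MulChar.map_zero])
    have hv : (ZMod.chineseRemainder hpq a).2 ≠ 0 := fun h =>
      ha0 (by simp [jacobiChar, h, MulChar.map_zero])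
    have : NeZero (p - 1) := ⟨by have := (Fact.out : p.Prime).two_le; omega⟩
    have : NeZero (q - 1) := ⟨by have := (Fact.out : q.Prime).two_le; omega⟩
    obtain ⟨k, -, hk⟩ := (hgp ▸ IsPrimitiveRoot.orderOf (g : ZMod p)).eq_pow_of_pow_eq_one
      (ZMod.pow_card_sub_one_eq_one hu)
    obtain ⟨l, -, hl⟩ := (hgq ▸ IsPrimitiveRoot.orderOf (g : ZMod q)).eq_pow_of_pow_eq_one
      (ZMod.pow_card_sub_one_eq_one hv)
    obtain ⟨t, ht, i, hi, hki, hlt⟩ := exists_pow_eq_pow_add_and_pow_eq_pow (g : ZMod p)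
      (g : ZMod q) hL (hgp ▸ hpL) (hgq ▸ hqL) k l
    rw [hgp, hgq, ← hd] at hi
    have hat : a = (g : ZMod (p * q)) ^ t * (x : ZMod (p * q)) ^ i :=
      (ZMod.chineseRemainder hpq).injective <| by
      rw [chineseRemainder_pow_mul_pow hpq hxp hxq, ← hki, hk, ← hlt, hl]
    have hij : Even (i + j) := by
      refine (neg_one_pow_eq_one_iff_even (R := ℂ) (by norm_num)).mp ?_
      rw [pow_add, ← jacobiChar_pow_mul_pow hpq hp hq hgp hgq hxp hxq t, ← hat, ha, ← pow_add,
        ← two_mul, pow_mul]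
      norm_num
    obtain ⟨d', rfl⟩ := hd2
    rw [Nat.even_iff] at hij
    exact ⟨i / 2, by omega, t, ht, by rw [hat, show 2 * (i / 2) + j = i by omega]⟩

end Whiteman

theorem pair_half_eq_of_sq_eq_neg {S : ℂ} {r : ℝ} (hr : 0 ≤ r) (hS : S ^ 2 = -r) :
    ({(1 + S) / 2, (1 - S) / 2} : Set ℂ) =
      {(1 + Complex.I * Real.sqrt r) / 2, (1 - Complex.I * Real.sqrt r) / 2} := by
  have h : S ^ 2 = (Complex.I * Real.sqrt r) ^ 2 := by
    rw [hS, mul_pow, Complex.I_sq, ← Complex.ofReal_pow, Real.sq_sqrt hr]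
    ring
  rcases sq_eq_sq_iff_eq_or_eq_neg.mp h with h | h
  · rw [h]
  · rw [h, Set.pair_comm]
    ring_nf

theorem stmt_13
    (p q : ℕ) (hp : p.Prime) (hq : q.Prime) (hop : Odd p) (hoq : Odd q)
    (hne : p ≠ q) (d : ℕ) (hd : d = Nat.gcd (p - 1) (q - 1))
    (g : ℕ) (hgp : orderOf (g : ZMod p) = p - 1) (hgq : orderOf (g : ZMod q) = q - 1)
    (x : ℕ) (hxp : (x : ZMod p) = (g : ZMod p)) (hxq : (x : ZMod q) = 1)
    (L : ℕ) (hL : L = (p - 1) * (q - 1) / d)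
    (D : ℕ → Finset (ZMod (p * q)))
    (hD : D = fun i => (Finset.range L).image
      (fun t => (g : ZMod (p * q)) ^ t * (x : ZMod (p * q)) ^ i))
    (Dstar : ℕ → Finset (ZMod (p * q)))
    (hDstar : Dstar = fun j => (Finset.range (d / 2)).biUnion (fun i => D (2 * i + j)))
    (f f' : ℕ) (hf : p - 1 = d * f) (hf' : q - 1 = d * f')
    (ω : ℂ) (hω : IsPrimitiveRoot ω (p * q))
    (Ω : ℕ → ℂ) (hΩ : Ω = fun j => ∑ a ∈ Dstar j, ω ^ (a.val))
    (hcase : Even (f * f') ∧ d % 4 = 2) :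
    Ω 0 * Ω 1 = (1 + (p * q : ℕ)) / 4 ∧
      ({Ω 0, Ω 1} : Set ℂ) =
        {(1 + Complex.I * Real.sqrt (p * q)) / 2,
         (1 - Complex.I * Real.sqrt (p * q)) / 2} := by
  obtain ⟨hff', hd4⟩ := hcase
  have : Fact p.Prime := ⟨hp⟩
  have : Fact q.Prime := ⟨hq⟩
  have hpq : p.Coprime q := (Nat.coprime_primes hp hq).mpr hne
  have hp2 : p ≠ 2 := by rintro rfl; norm_num at hop
  have hq2 : q ≠ 2 := by rintro rfl; norm_num at hoq
  obtain ⟨hpL, hqL, hL0⟩ := hL ▸ dvd_mul_div_and_dvd_mul_div_and_pos ⟨f, hf⟩ ⟨f', hf'⟩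
    (Nat.sub_pos_of_lt hp.one_lt) (Nat.sub_pos_of_lt hq.one_lt)
  set ψ := AddChar.zmodChar (p * q) hω.pow_eq_one
  have hψ : ψ.IsPrimitive := AddChar.zmodChar_primitive_of_primitive_root _ hω
  set S := gaussSum (complexQuadraticChar p) (ψ.crtFst hpq) *
    gaussSum (complexQuadraticChar q) (ψ.crtSnd hpq)
  have hΩS : ∀ j < 2, Ω j = (1 + (-1) ^ j * S) / 2 := by
    intro j hj
    rw [← sum_filter_jacobiChar_eq_neg_one_pow hpq hψ j, hΩ, hDstar, hD]
    refine sum_congr ?_ fun a _ => (AddChar.zmodChar_apply _ _).symm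
    ext a
    rw [mem_filter, ← mem_biUnion_image_iff_jacobiChar hpq hp2 hq2 hgp hgq hxp hxq hd
      (Nat.even_iff.mpr (by omega)) hL0 hpL hqL hj]
    simp
  have hS : S ^ 2 = -(p * q : ℂ) := by
    refine gaussSum_mul_gaussSum_sq hp2 hq2 (ψ.crtFst_ne_one hpq hψ) (ψ.crtSnd_ne_one hpq hψ) ?_
    have h4 := add_one_mul_add_one_mod_four hd hf hf' hd4 hff'
    rwa [Nat.sub_add_cancel hp.one_lt.le, Nat.sub_add_cancel hq.one_lt.le] at h4
  rw [hΩS 0 (by norm_num), hΩS 1 (by norm_num)]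
  constructor
  · push_cast
    linear_combination (-1 / 4 : ℂ) * hS
  · simpa [sub_eq_add_neg] using pair_half_eq_of_sq_eq_neg (r := p * q) (by positivity)
      (by push_cast; exact hS)
end

section
/- Let {s_i} be the modified Jacobi sequence of period N = pq, ω = e^{2πi/N}, and S(x) = Σ_{i=0}^{N-1} s_i x^i. If a ∈ P = {p, 2p, ..., (q-1)p}, then S(ω^a) = -(p+1)/2, and if a ∈ Q = {q, 2q, ..., (p-1)q}, then S(ω^a) = (q-1)/2. -/
/-!
Write `a = k p`. Then `ζ = ω ^ a = (ω ^ p) ^ k` is a primitive `q`-th root of unity, and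
`S ζ = ∑_{c ∈ D₁* ∪ P} ζ ^ c` only sees `c` modulo `q`. Modulo `q`, an element `g ^ t x ^ (2i+1)`
of the class `D_{2i+1}` is just `g ^ t` (as `x ≡ 1`), which for `t < lcm (p-1) (q-1)` runs
`(p-1)/d` times through all nonzero residues, whose `ζ`-powers sum to `-1`. So the `d/2` odd
classes contribute `-(p-1)/2`, and `P = {j p}` contributes `∑_{j=1}^{q-1} (ζ ^ p) ^ j = -1`.
For `a = k q`, `ζ` is a primitive `p`-th root; modulo `p` the factor `x ^ (2i+1)` is a fixed
nonzero residue, so the classes contribute `-(q-1)/2`, while every element of `P` is `0` modulo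
`p` and contributes `1`.
-/

open Finset

theorem Function.Periodic.sum_range_mul {M : Type*} [AddCommMonoid M] {f : ℕ → M} {n : ℕ}
    (hf : Function.Periodic f n) (m : ℕ) :
    ∑ t ∈ range (m * n), f t = m • ∑ t ∈ range n, f t := by
  induction m with
  | zero => simp
  | succ m ih =>
    rw [add_mul, one_mul, sum_range_add, ih, succ_nsmul]
    congr 1
    refine sum_congr rfl fun t _ => ?_
    simpa [add_comm] using hf.nat_mul m t

theorem ZMod.sum_range_ite_natCast_mem {M : Type*} [AddCommMonoid M] (N : ℕ) [NeZero N]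
    (A : Finset (ZMod N)) (f : ℕ → M) :
    ∑ i ∈ range N, (if (i : ZMod N) ∈ A then f i else 0) = ∑ c ∈ A, f c.val := by
  rw [← sum_filter]
  refine sum_nbij' (fun i => (i : ZMod N)) ZMod.val (by simp) (by simp [ZMod.val_lt])
    (fun i hi => ?_) (by simp) (fun i hi => ?_) <;>
  · simp only [mem_filter, mem_range] at hi
    simp [ZMod.val_natCast_of_lt hi.1]

theorem Nat.cast_div_two_mul_cast_div {K : Type*} [Field K] [CharZero K] {d n : ℕ}
    (hd : 2 ∣ d) (hdn : d ∣ n) : ((d / 2 : ℕ) : K) * ((n / d : ℕ) : K) = n / 2 := by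
  obtain ⟨e, rfl⟩ := hd
  obtain ⟨m, rfl⟩ := hdn
  rcases Nat.eq_zero_or_pos e with rfl | he
  · simp
  rw [Nat.mul_div_cancel_left _ two_pos, Nat.mul_div_cancel_left _ (by omega)]
  push_cast
  ring

section

variable {r g : ℕ}

theorem injOn_pow_mod (hr : 1 < r) (hg : orderOf (g : ZMod r) = r - 1) :
    Set.InjOn (fun t => g ^ t % r) (range (r - 1)) := by
  intro t ht s hs hts
  have hfin : IsOfFinOrder (g : ZMod r) := orderOf_pos_iff.mp (by omega)
  have hpow : (g : ZMod r) ^ t = (g : ZMod r) ^ s := by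
    exact_mod_cast (ZMod.natCast_eq_natCast_iff' _ _ _).mpr hts
  rw [hfin.pow_eq_pow_iff_modEq, hg] at hpow
  exact hpow.eq_of_lt_of_lt (mem_range.mp ht) (mem_range.mp hs)

theorem image_pow_mod_eq_Icc (hr : r.Prime) (hg : orderOf (g : ZMod r) = r - 1) :
    (range (r - 1)).image (fun t => g ^ t % r) = Icc 1 (r - 1) := by
  have : Fact r.Prime := ⟨hr⟩
  have hinj := injOn_pow_mod hr.one_lt hg
  refine eq_of_subset_of_card_le (fun j hj => ?_) (by simp [card_image_of_injOn hinj])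
  obtain ⟨t, -, rfl⟩ := mem_image.mp hj
  have hunit : IsUnit ((g : ZMod r) ^ t) :=
    (orderOf_pos_iff.mp (by have := hr.two_le; omega)).isUnit.pow t
  have hne : g ^ t % r ≠ 0 := by
    intro h
    have h0 : ((g ^ t : ℕ) : ZMod r) = 0 :=
      (ZMod.natCast_eq_zero_iff _ _).mpr (Nat.dvd_of_mod_eq_zero h)
    exact hunit.ne_zero (by exact_mod_cast h0)
  simp only [mem_Icc]
  have := Nat.mod_lt (g ^ t) hr.pos
  omega

namespace IsPrimitiveRoot

variable {K : Type*} [CommRing K] [IsDomain K] {ζ : K}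

theorem sum_Icc_pow_eq_neg_one (hζ : IsPrimitiveRoot ζ r) (hr : 1 < r) :
    ∑ j ∈ Icc 1 (r - 1), ζ ^ j = -1 := by
  have hrange : range r = insert 0 (Icc 1 (r - 1)) := by
    ext j
    simp only [mem_range, mem_insert, mem_Icc]
    omega
  have h := hζ.geom_sum_eq_zero hr
  rw [hrange, sum_insert (by simp), pow_zero] at h
  linear_combination h

theorem sum_range_pow_pow_eq_neg (hζ : IsPrimitiveRoot ζ r) (hr : r.Prime)
    (hg : orderOf (g : ZMod r) = r - 1) (m : ℕ) :
    ∑ t ∈ range (m * (r - 1)), ζ ^ g ^ t = -m := by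
  have hmod (n : ℕ) : ζ ^ n = ζ ^ (n % r) := pow_eq_pow_mod n hζ.pow_eq_one
  have hper : Function.Periodic (fun t => ζ ^ g ^ t) (r - 1) := by
    intro t
    simp only
    rw [hmod, hmod (g ^ t), (ZMod.natCast_eq_natCast_iff' _ _ r).mp]
    push_cast
    rw [pow_add, ← hg, pow_orderOf_eq_one, mul_one]
  rw [hper.sum_range_mul, sum_congr rfl fun t _ => hmod _,
    ← sum_image (f := (ζ ^ ·)) (injOn_pow_mod hr.one_lt hg), image_pow_mod_eq_Icc hr hg,
    hζ.sum_Icc_pow_eq_neg_one hr.one_lt]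
  simp

theorem sum_sum_pow_pow_mul_pow_eq_neg (hζ : IsPrimitiveRoot ζ r) (hr : r.Prime)
    (hg : orderOf (g : ZMod r) = r - 1) {x : ℕ} (hx : x.Coprime r) (n m : ℕ) :
    ∑ i ∈ range n, ∑ t ∈ range (m * (r - 1)), ζ ^ (g ^ t * x ^ (2 * i + 1)) =
      -(n * m) := by
  have hxi (i : ℕ) : IsPrimitiveRoot (ζ ^ x ^ (2 * i + 1)) r :=
    hζ.pow_of_coprime _ (hx.pow_left _)
  simp_rw [mul_comm (g ^ _), pow_mul, fun i => (hxi i).sum_range_pow_pow_eq_neg hr hg m]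
  simp

end IsPrimitiveRoot

theorem IsPrimitiveRoot.sum_sum_pow_pow_mul_pow_eq_neg_half {K : Type*} [Field K] [CharZero K]
    {ζ : K} {a : ℕ} (hζ : IsPrimitiveRoot ζ r) (hr : r.Prime) (ha : Odd a) (hr' : Odd r)
    (hg : orderOf (g : ZMod r) = r - 1) {x : ℕ} (hx : x.Coprime r) :
    ∑ i ∈ range (Nat.gcd (a - 1) (r - 1) / 2), ∑ t ∈ range (Nat.lcm (a - 1) (r - 1)),
      ζ ^ (g ^ t * x ^ (2 * i + 1)) = -(((a : K) - 1) / 2) := by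
  have hlcm : Nat.lcm (a - 1) (r - 1) = (a - 1) / Nat.gcd (a - 1) (r - 1) * (r - 1) :=
    Nat.mul_div_right_comm (Nat.gcd_dvd_left _ _) _
  have h2 : 2 ∣ Nat.gcd (a - 1) (r - 1) :=
    Nat.dvd_gcd (Nat.Odd.sub_odd ha odd_one).two_dvd (Nat.Odd.sub_odd hr' odd_one).two_dvd
  rw [hlcm, hζ.sum_sum_pow_pow_mul_pow_eq_neg hr hg hx,
    Nat.cast_div_two_mul_cast_div h2 (Nat.gcd_dvd_left _ _), Nat.cast_pred ha.pos]
end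

def whitemanClass (p q g x i : ℕ) : Finset (ZMod (p * q)) :=
  (range (Nat.lcm (p - 1) (q - 1))).image fun t => (g : ZMod (p * q)) ^ t * (x : ZMod (p * q)) ^ i

def whitemanOddUnion (p q g x : ℕ) : Finset (ZMod (p * q)) :=
  (range (Nat.gcd (p - 1) (q - 1) / 2)).biUnion fun i => whitemanClass p q g x (2 * i + 1)

def nonzeroMultiples (p q : ℕ) : Finset (ZMod (p * q)) :=
  (Icc 1 (q - 1)).image fun k => ((k * p : ℕ) : ZMod (p * q))

section Whiteman

variable {p q g x : ℕ}

theorem modEq_of_pow_mul_pow_eq (hp : 1 < p) (hq : 1 < q)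
    (hgp : orderOf (g : ZMod p) = p - 1) (hgq : orderOf (g : ZMod q) = q - 1)
    (hxp : (x : ZMod p) = g) (hxq : (x : ZMod q) = 1) {t s i j : ℕ}
    (h : (g : ZMod (p * q)) ^ t * (x : ZMod (p * q)) ^ i =
      (g : ZMod (p * q)) ^ s * (x : ZMod (p * q)) ^ j) :
    t + i ≡ s + j [MOD p - 1] ∧ t ≡ s [MOD q - 1] := by
  constructor
  · have hmod := congrArg (ZMod.castHom (dvd_mul_right p q) (ZMod p)) h
    simp only [map_mul, map_pow, map_natCast, hxp, ← pow_add] at hmod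
    rwa [(orderOf_pos_iff.mp (by omega)).pow_eq_pow_iff_modEq, hgp] at hmod
  · have hmod := congrArg (ZMod.castHom (dvd_mul_left q p) (ZMod q)) h
    simp only [map_mul, map_pow, map_natCast, hxq, one_pow, mul_one] at hmod
    rwa [(orderOf_pos_iff.mp (by omega)).pow_eq_pow_iff_modEq, hgq] at hmod

theorem injOn_pow_mul_pow (hp : 1 < p) (hq : 1 < q)
    (hgp : orderOf (g : ZMod p) = p - 1) (hgq : orderOf (g : ZMod q) = q - 1)
    (hxp : (x : ZMod p) = g) (hxq : (x : ZMod q) = 1) (i : ℕ) :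
    Set.InjOn (fun t => (g : ZMod (p * q)) ^ t * (x : ZMod (p * q)) ^ i)
      (range (Nat.lcm (p - 1) (q - 1))) := by
  intro t ht s hs h
  obtain ⟨hp', hq'⟩ := modEq_of_pow_mul_pow_eq hp hq hgp hgq hxp hxq h
  exact (Nat.mod_lcm (hp'.add_right_cancel' i) hq').eq_of_lt_of_lt
    (mem_range.mp ht) (mem_range.mp hs)

theorem pairwiseDisjoint_whitemanClass_odd (hp : 1 < p) (hq : 1 < q)
    (hgp : orderOf (g : ZMod p) = p - 1) (hgq : orderOf (g : ZMod q) = q - 1)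
    (hxp : (x : ZMod p) = g) (hxq : (x : ZMod q) = 1) :
    (range (Nat.gcd (p - 1) (q - 1) / 2) : Set ℕ).PairwiseDisjoint
      fun i => whitemanClass p q g x (2 * i + 1) := by
  intro i hi j hj hij
  simp only [coe_range, Set.mem_Iio] at hi hj
  rw [Function.onFun, disjoint_left]
  simp only [whitemanClass, mem_image, not_exists, not_and]
  rintro _ ⟨t, -, rfl⟩ s - hs
  obtain ⟨hp', hq'⟩ := modEq_of_pow_mul_pow_eq hp hq hgp hgq hxp hxq hs
  have hij' : 2 * j ≡ 2 * i [MOD Nat.gcd (p - 1) (q - 1)] :=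
    ((hq'.of_dvd (Nat.gcd_dvd_right _ _)).add_left_cancel
      (hp'.of_dvd (Nat.gcd_dvd_left _ _))).add_right_cancel' 1
  have := hij'.eq_of_lt_of_lt (by omega) (by omega)
  omega

theorem disjoint_whitemanClass_nonzeroMultiples (hp : 1 < p)
    (hgp : orderOf (g : ZMod p) = p - 1) (hxp : (x : ZMod p) = g) (i : ℕ) :
    Disjoint (whitemanClass p q g x i) (nonzeroMultiples p q) := by
  have : Fact (1 < p) := ⟨hp⟩
  rw [disjoint_left]
  simp only [whitemanClass, nonzeroMultiples, mem_image, not_exists, not_and]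
  rintro _ ⟨t, -, rfl⟩ k - hk
  have hmod := congrArg (ZMod.castHom (dvd_mul_right p q) (ZMod p)) hk
  simp only [map_mul, map_pow, map_natCast, hxp, ← pow_add, Nat.cast_mul, ZMod.natCast_self,
    mul_zero] at hmod
  exact ((orderOf_pos_iff.mp (by omega)).isUnit.pow _).ne_zero hmod.symm

theorem injOn_natCast_mul (hp : 0 < p) :
    Set.InjOn (fun k => ((k * p : ℕ) : ZMod (p * q))) (Icc 1 (q - 1)) := by
  intro k hk l hl h
  simp only [coe_Icc, Set.mem_Icc] at hk hl
  have := ((ZMod.natCast_eq_natCast_iff _ _ _).mp h).eq_of_lt_of_lt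
    (by rw [mul_comm p]; exact Nat.mul_lt_mul_of_pos_right (by omega) hp)
    (by rw [mul_comm p]; exact Nat.mul_lt_mul_of_pos_right (by omega) hp)
  exact Nat.eq_of_mul_eq_mul_right hp this

theorem sum_pow_val_whitemanOddUnion_union {R : Type*} [Semiring R] (hp : 1 < p) (hq : 1 < q)
    (hgp : orderOf (g : ZMod p) = p - 1) (hgq : orderOf (g : ZMod q) = q - 1)
    (hxp : (x : ZMod p) = g) (hxq : (x : ZMod q) = 1) {z : R} (hz : z ^ (p * q) = 1) :
    ∑ c ∈ whitemanOddUnion p q g x ∪ nonzeroMultiples p q,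
        z ^ c.val =
      ∑ i ∈ range (Nat.gcd (p - 1) (q - 1) / 2), ∑ t ∈ range (Nat.lcm (p - 1) (q - 1)),
          z ^ (g ^ t * x ^ (2 * i + 1)) +
        ∑ k ∈ Icc 1 (q - 1), z ^ (k * p) := by
  have hval (n : ℕ) : z ^ (n : ZMod (p * q)).val = z ^ n := by
    rw [ZMod.val_natCast, ← pow_eq_pow_mod n hz]
  rw [whitemanOddUnion, sum_union ((disjoint_biUnion_left _ _ _).mpr fun i _ =>
      disjoint_whitemanClass_nonzeroMultiples hp hgp hxp _),
    sum_biUnion (pairwiseDisjoint_whitemanClass_odd hp hq hgp hgq hxp hxq),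
    nonzeroMultiples, sum_image (injOn_natCast_mul (by omega))]
  congr 1
  · refine sum_congr rfl fun i _ => ?_
    rw [whitemanClass, sum_image (injOn_pow_mul_pow hp hq hgp hgq hxp hxq _)]
    exact sum_congr rfl fun t _ => by rw [← hval (g ^ t * x ^ (2 * i + 1))]; push_cast; rfl
  · simp only [hval]

theorem sum_pow_val_whitemanOddUnion_union_at_multiple_of_p {K : Type*} [Field K] [CharZero K]
    (hp : p.Prime) (hq : q.Prime) (hop : Odd p) (hoq : Odd q) (hne : p ≠ q)
    (hgp : orderOf (g : ZMod p) = p - 1) (hgq : orderOf (g : ZMod q) = q - 1)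
    (hxp : (x : ZMod p) = g) (hxq : (x : ZMod q) = 1) {ω : K} (hω : IsPrimitiveRoot ω (p * q))
    {k : ℕ} (hk : k ∈ Icc 1 (q - 1)) :
    ∑ c ∈ whitemanOddUnion p q g x ∪ nonzeroMultiples p q,
      (ω ^ (k * p)) ^ c.val = -((p : K) + 1) / 2 := by
  rw [mem_Icc] at hk
  have hζ : IsPrimitiveRoot ((ω ^ p) ^ k) q :=
    (hω.pow (Nat.mul_pos hp.pos hq.pos) rfl).pow_of_coprime k
      (Nat.coprime_of_lt_prime (by omega) (by omega) hq).symm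
  rw [pow_mul' ω k, sum_pow_val_whitemanOddUnion_union hp.one_lt hq.one_lt hgp hgq hxp hxq
      ((hζ.pow_eq_one_iff_dvd _).mpr (dvd_mul_left q p)),
    hζ.sum_sum_pow_pow_mul_pow_eq_neg_half hq hop hoq hgq
      ((ZMod.isUnit_iff_coprime x q).mp (hxq ▸ isUnit_one))]
  simp_rw [pow_mul']
  rw [(hζ.pow_of_coprime p ((Nat.coprime_primes hp hq).mpr hne)).sum_Icc_pow_eq_neg_one hq.one_lt]
  ring

theorem sum_pow_val_whitemanOddUnion_union_at_multiple_of_q {K : Type*} [Field K] [CharZero K]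
    (hp : p.Prime) (hq : q.Prime) (hop : Odd p) (hoq : Odd q)
    (hgp : orderOf (g : ZMod p) = p - 1) (hgq : orderOf (g : ZMod q) = q - 1)
    (hxp : (x : ZMod p) = g) (hxq : (x : ZMod q) = 1) {ω : K} (hω : IsPrimitiveRoot ω (p * q))
    {k : ℕ} (hk : k ∈ Icc 1 (p - 1)) :
    ∑ c ∈ whitemanOddUnion p q g x ∪ nonzeroMultiples p q,
      (ω ^ (k * q)) ^ c.val = ((q : K) - 1) / 2 := by
  rw [mem_Icc] at hk
  have hζ : IsPrimitiveRoot ((ω ^ q) ^ k) p :=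
    (hω.pow (Nat.mul_pos hp.pos hq.pos) (mul_comm p q)).pow_of_coprime k
      (Nat.coprime_of_lt_prime (by omega) (by omega) hp).symm
  have hone (j : ℕ) : ((ω ^ q) ^ k) ^ (j * p) = 1 := by
    rw [← pow_mul, ← pow_mul, show q * (k * (j * p)) = p * q * (k * j) by ring, pow_mul,
      hω.pow_eq_one, one_pow]
  have hx : x.Coprime p := (ZMod.isUnit_iff_coprime x p).mp
    (hxp ▸ (orderOf_pos_iff.mp (by have := hp.two_le; omega)).isUnit)
  rw [pow_mul' ω k, sum_pow_val_whitemanOddUnion_union hp.one_lt hq.one_lt hgp hgq hxp hxq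
      ((hζ.pow_eq_one_iff_dvd _).mpr (dvd_mul_right p q)), Nat.gcd_comm, Nat.lcm_comm,
    hζ.sum_sum_pow_pow_mul_pow_eq_neg_half hp hoq hop hgp hx]
  simp only [hone, sum_const, Nat.card_Icc, nsmul_eq_mul, mul_one]
  rw [Nat.add_sub_cancel, Nat.cast_pred hq.pos]
  ring

end Whiteman

theorem stmt_15_general
    (p q : ℕ) (hp : p.Prime) (hq : q.Prime) (hop : Odd p) (hoq : Odd q)
    (hne : p ≠ q) (d : ℕ) (hd : d = Nat.gcd (p - 1) (q - 1))
    (g : ℕ) (hgp : orderOf (g : ZMod p) = p - 1) (hgq : orderOf (g : ZMod q) = q - 1)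
    (x : ℕ) (hxp : (x : ZMod p) = (g : ZMod p)) (hxq : (x : ZMod q) = 1)
    (L : ℕ) (hL : L = (p - 1) * (q - 1) / d)
    (D : ℕ → Finset (ZMod (p * q)))
    (hD : D = fun i => (Finset.range L).image
      (fun t => (g : ZMod (p * q)) ^ t * (x : ZMod (p * q)) ^ i))
    (Dstar : ℕ → Finset (ZMod (p * q)))
    (hDstar : Dstar = fun j => (Finset.range (d / 2)).biUnion (fun i => D (2 * i + j)))
    (P : Finset (ZMod (p * q)))
    (hP : P = (Finset.Icc 1 (q - 1)).image (fun k => ((k * p : ℕ) : ZMod (p * q))))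
    (s : ℕ → ℕ)
    (hs : s = fun i : ℕ => if ((i : ℕ) : ZMod (p * q)) ∈ Dstar 1 ∪ P then 1 else 0)
    (Q : Finset (ZMod (p * q)))
    (hQ : Q = (Finset.Icc 1 (p - 1)).image (fun k => ((k * q : ℕ) : ZMod (p * q))))
    (ω : ℂ) (hω : IsPrimitiveRoot ω (p * q))
    (S : ℂ → ℂ) (hS : S = fun z => ∑ i ∈ Finset.range (p * q), (s i : ℂ) * z ^ i) :
    (∀ a ∈ P, S (ω ^ a.val) = -((p : ℂ) + 1) / 2) ∧
      (∀ a ∈ Q, S (ω ^ a.val) = ((q : ℂ) - 1) / 2) := by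
  have hval (n : ℕ) : ω ^ (n : ZMod (p * q)).val = ω ^ n := by
    rw [ZMod.val_natCast, ← pow_eq_pow_mod n hω.pow_eq_one]
  have hDstar1 : Dstar 1 = whitemanOddUnion p q g x := by
    subst hDstar hD hL hd
    rfl -- `Nat.lcm m n` is by definition `m * n / Nat.gcd m n`
  have hP' : P = nonzeroMultiples p q := hP
  have hS_eq (z : ℂ) :
      S z = ∑ c ∈ whitemanOddUnion p q g x ∪ nonzeroMultiples p q, z ^ c.val := by
    have : NeZero (p * q) := ⟨(Nat.mul_pos hp.pos hq.pos).ne'⟩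
    subst hS hs
    simp only [hDstar1, hP', Nat.cast_ite, Nat.cast_one, Nat.cast_zero, ite_mul, one_mul, zero_mul]
    exact ZMod.sum_range_ite_natCast_mem _ _ _
  refine ⟨fun a ha => ?_, fun a ha => ?_⟩
  · obtain ⟨k, hk, rfl⟩ := mem_image.mp (hP ▸ ha)
    rw [hval, hS_eq, sum_pow_val_whitemanOddUnion_union_at_multiple_of_p hp hq hop hoq hne hgp hgq
      hxp hxq hω hk]
  · obtain ⟨k, hk, rfl⟩ := mem_image.mp (hQ ▸ ha)
    rw [hval, hS_eq, sum_pow_val_whitemanOddUnion_union_at_multiple_of_q hp hq hop hoq hgp hgq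
      hxp hxq hω hk]

theorem stmt_15
    (p q : ℕ) (hp : p.Prime) (hq : q.Prime) (hop : Odd p) (hoq : Odd q)
    (hne : p ≠ q) (d : ℕ) (hd : d = Nat.gcd (p - 1) (q - 1))
    (g : ℕ) (hgp : orderOf (g : ZMod p) = p - 1) (hgq : orderOf (g : ZMod q) = q - 1)
    (x : ℕ) (hxp : (x : ZMod p) = (g : ZMod p)) (hxq : (x : ZMod q) = 1)
    (L : ℕ) (hL : L = (p - 1) * (q - 1) / d)
    (D : ℕ → Finset (ZMod (p * q)))
    (hD : D = fun i => (Finset.range L).image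
      (fun t => (g : ZMod (p * q)) ^ t * (x : ZMod (p * q)) ^ i))
    (Dstar : ℕ → Finset (ZMod (p * q)))
    (hDstar : Dstar = fun j => (Finset.range (d / 2)).biUnion (fun i => D (2 * i + j)))
    (P : Finset (ZMod (p * q)))
    (hP : P = (Finset.Icc 1 (q - 1)).image (fun k => ((k * p : ℕ) : ZMod (p * q))))
    (s : ℕ → ℕ)
    (hs : s = fun i : ℕ => if ((i : ℕ) : ZMod (p * q)) ∈ Dstar 1 ∪ P then 1 else 0)
    (hlt : p < q)
    (Q : Finset (ZMod (p * q)))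
    (hQ : Q = (Finset.Icc 1 (p - 1)).image (fun k => ((k * q : ℕ) : ZMod (p * q))))
    (ω : ℂ) (hω : IsPrimitiveRoot ω (p * q))
    (S : ℂ → ℂ) (hS : S = fun z => ∑ i ∈ Finset.range (p * q), (s i : ℂ) * z ^ i) :
    (∀ a ∈ P, S (ω ^ a.val) = -((p : ℂ) + 1) / 2) ∧
      (∀ a ∈ Q, S (ω ^ a.val) = ((q : ℂ) - 1) / 2) :=
  stmt_15_general p q hp hq hop hoq hne d hd g hgp hgq x hxp hxq L hL D hD Dstar hDstar P hP s hs Q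
    hQ ω hω S hS
end
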